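/- Let Γ be a finite graph with m ≥ 3 vertices and vertex degrees d_1 ≤ d_2 ≤ ⋯ ≤ d_m. If for every k with 1 ≤ k < m/2 one has d_k ≥ k+1 or d_{m−k} ≥ m−k, then Γ contains a Hamiltonian cycle (Chvátal's criterion). -/

import Mathlib

/-- The vertex degree of `x` in a graph `Γ`. -/
noncomputable def vertexDegree {V : Type*} (Γ : SimpleGraph V) (x : V) : ℕ :=
  (Γ.neighborSet x).ncard

/-!
Bondy–Chvátal closure. Suppose `Γ` is not Hamiltonian and let `G ≥ Γ` be a maximal
non-Hamiltonian supergraph. For non-adjacent `u ≠ v` the graph `G ⊔ edge u v` is Hamiltonian, so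
`G` has a Hamiltonian path from `u` to `v`; Ore's rotation argument then forces
`deg u + deg v < n`. Choose such a pair with `deg u + deg v` maximal and `k := deg u ≤ deg v`.
The non-neighbours of `v` are at least `k` vertices of degree `≤ k`, and `u` together with its
non-neighbours are `n - k` vertices of degree `< n - k`; the degree condition at `k` forbids
both. Hence `G` is complete, and so Hamiltonian after all.
-/

open Finset Function

lemma Fin.exists_mem_le_of_lt_card {n : ℕ} {s : Finset (Fin n)} {i : Fin n} (hi : i.val < #s) :
    ∃ j ∈ s, i ≤ j := by
  by_contra! h
  have := card_le_card fun j hj => mem_Iio.mpr (h j hj)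
  rw [Fin.card_Iio] at this
  omega

lemma exists_mem_le_apply_of_monotone {α β : Type*} [Preorder β] {n : ℕ} {f : α → β}
    (e : Fin n ≃ α) (hmono : Monotone fun i => f (e i)) {k : ℕ} (hk : k < n) {b : β}
    (hb : b ≤ f (e ⟨k, hk⟩)) {W : Finset α} (hW : k < #W) : ∃ w ∈ W, b ≤ f w := by
  obtain ⟨j, hj, hkj⟩ :=
    Fin.exists_mem_le_of_lt_card (i := ⟨k, hk⟩) (s := W.map e.symm.toEmbedding)
      (by rwa [card_map])
  exact ⟨e j, by simpa using hj, hb.trans (hmono hkj)⟩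

lemma List.Nodup.length_eq_card {α : Type*} [Fintype α] [DecidableEq α] {l : List α}
    (hnd : l.Nodup) (hmem : ∀ a, a ∈ l) : l.length = Fintype.card α := by
  rw [← List.toFinset_card_of_nodup hnd,
    eq_univ_iff_forall.mpr fun a => List.mem_toFinset.mpr (hmem a), card_univ]

lemma vertexDegree_eq_degree {V : Type*} (G : SimpleGraph V) (x : V) [Fintype (G.neighborSet x)] :
    vertexDegree G x = G.degree x := by
  rw [vertexDegree, ← SimpleGraph.card_neighborSet_eq_degree, Set.ncard_eq_toFinset_card',
    Set.toFinset_card]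

namespace SimpleGraph
variable {V : Type*} {G : SimpleGraph V} {u v : V}

lemma adj_of_sup_edge_adj {x y : V} (h : (G ⊔ edge u v).Adj x y) (hx : x ≠ u) (hy : y ≠ u) :
    G.Adj x y := by
  grind

lemma adj_of_sup_edge_adj_left {w : V} (h : (G ⊔ edge u v).Adj u w) (hw : w ≠ v) :
    G.Adj u w := by
  grind

lemma card_filter_adj_eq_degree [Fintype V] [DecidableEq V] [DecidableRel G.Adj] {α : Type*}
    [Fintype α] {f : α → V} (hf : Injective f)
    (hrange : ∀ y, G.Adj v y → y ∈ Set.range f) :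
    #{a | G.Adj v (f a)} = G.degree v := by
  rw [← card_neighborFinset_eq_degree, ← card_image_of_injective _ hf]
  congr 1
  ext y
  simp only [mem_image, mem_filter, mem_univ, true_and, mem_neighborFinset]
  refine ⟨by rintro ⟨a, ha, rfl⟩; exact ha, fun hy => ?_⟩
  obtain ⟨a, rfl⟩ := hrange y hy
  exact ⟨a, hy, rfl⟩

lemma Walk.exists_support_eq_cons_append_singleton {c : G.Walk u u} (hc : ¬c.Nil) :
    ∃ rest, c.support = u :: (rest ++ [u]) := by
  cases c with
  | nil => exact absurd Walk.Nil.nil hc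
  | cons _ q =>
    refine ⟨q.support.dropLast, ?_⟩
    conv_lhs =>
      rw [support_cons, ← List.dropLast_append_getLast q.support_ne_nil, getLast_support]

section Hamiltonian
variable [DecidableEq V]

lemma exists_adj_getElem_of_card_le_degree_add [Fintype V] [DecidableRel G.Adj] {l : List V}
    (hnd : l.Nodup) (hmem : ∀ y, y ∈ l) (hu : l.head? = some u) (hv : l.getLast? = some v)
    (hdeg : Fintype.card V ≤ G.degree u + G.degree v) :
    ∃ j, ∃ h : j + 1 < l.length, G.Adj v l[j] ∧ G.Adj u l[j + 1] := by
  have hn := hnd.length_eq_card hmem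
  have hpos : 0 < l.length := List.length_pos_iff.mpr (by rintro rfl; simp at hu)
  have hl0 : l[0] = u := by simpa [List.head?_eq_getElem?, List.getElem?_eq_getElem hpos] using hu
  have hlast : l[l.length - 1] = v := by
    simpa [List.getLast?_eq_getElem?, List.getElem?_eq_getElem (Nat.sub_lt hpos one_pos)] using hv
  -- pigeonhole over the `n - 1` edges `l[j] l[j+1]` of the path
  let f₀ : Fin (l.length - 1) → V := fun j => l[j.1]'(by omega)
  let f₁ : Fin (l.length - 1) → V := fun j => l[j.1 + 1]'(by omega)
  have hf₀ : Injective f₀ := fun i j h => Fin.ext (hnd.getElem_inj_iff.mp h)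
  have hf₁ : Injective f₁ := fun i j h => Fin.ext (by simpa using hnd.getElem_inj_iff.mp h)
  have hA : #{j | G.Adj v (f₀ j)} = G.degree v := by
    refine card_filter_adj_eq_degree hf₀ fun y hy => ?_
    obtain ⟨k, hk, rfl⟩ := List.getElem_of_mem (hmem y)
    have : k ≠ l.length - 1 := by rintro rfl; exact G.irrefl (hlast ▸ hy)
    exact ⟨⟨k, by omega⟩, rfl⟩
  have hB : #{j | G.Adj u (f₁ j)} = G.degree u := by
    refine card_filter_adj_eq_degree hf₁ fun y hy => ?_
    obtain ⟨k, hk, rfl⟩ := List.getElem_of_mem (hmem y)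
    have : k ≠ 0 := by rintro rfl; exact G.irrefl (hl0 ▸ hy)
    exact ⟨⟨k - 1, by omega⟩, by simp only [f₁]; congr 1; omega⟩
  have hcard : #(univ : Finset (Fin (l.length - 1))) <
      #{j | G.Adj v (f₀ j)} + #{j | G.Adj u (f₁ j)} := by
    rw [hA, hB, card_univ, Fintype.card_fin]
    omega
  obtain ⟨j, hj⟩ :=
    inter_nonempty_of_card_lt_card_add_card (subset_univ _) (subset_univ _) hcard
  simp only [mem_inter, mem_filter, mem_univ, true_and] at hj
  exact ⟨j, by omega, hj⟩

namespace Walk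

lemma IsHamiltonian.reverse {p : G.Walk u v} (hp : p.IsHamiltonian) :
    p.reverse.IsHamiltonian := fun a => by
  rw [support_reverse, List.count_reverse]
  exact hp a

lemma IsHamiltonian.isHamiltonianCycle_cons [Fintype V] {p : G.Walk u v} (hp : p.IsHamiltonian)
    (h : G.Adj v u) (h3 : 3 ≤ Fintype.card V) : (cons h p).IsHamiltonianCycle := by
  refine isHamiltonianCycle_iff_isCycle_and_support_count_tail_eq_one.mpr ⟨?_, hp⟩
  refine isCycle_iff_isPath_tail_and_le_length.mpr ⟨?_, ?_⟩
  · rw [tail_cons]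
    exact (isPath_copy _ _ _).mpr hp.isPath
  · rw [length_cons, hp.length_eq]
    omega

lemma exists_isHamiltonian_of_isChain [Fintype V] {l : List V} (hnd : l.Nodup)
    (hmem : ∀ x, x ∈ l) (hchain : l.IsChain G.Adj) (hu : l.head? = some u)
    (hv : l.getLast? = some v) : ∃ p : G.Walk u v, p.IsHamiltonian := by
  have hne : l ≠ [] := by rintro rfl; simp at hu
  have hu' : l.head hne = u := by simpa [List.head?_eq_some_head hne] using hu
  have hv' : l.getLast hne = v := by simpa [List.getLast?_eq_some_getLast hne] using hv
  refine ⟨(ofSupport l hne hchain).copy hu' hv', fun x => ?_⟩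
  rw [support_copy, support_ofSupport]
  exact List.count_eq_one_of_mem hnd (hmem x)

theorem IsHamiltonian.isHamiltonian_of_card_le_degree_add [Fintype V] [DecidableRel G.Adj]
    {p : G.Walk u v} (hp : p.IsHamiltonian) (h3 : 3 ≤ Fintype.card V)
    (hdeg : Fintype.card V ≤ G.degree u + G.degree v) : G.IsHamiltonian := by
  have hnd := hp.isPath.support_nodup
  have hu : p.support.head? = some u := by
    rw [List.head?_eq_some_head p.support_ne_nil, head_support]
  have hv : p.support.getLast? = some v := by
    rw [List.getLast?_eq_some_getLast p.support_ne_nil, getLast_support]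
  obtain ⟨j, hj, hvj, huj⟩ :=
    exists_adj_getElem_of_card_le_degree_add hnd hp.mem_support hu hv hdeg
  -- the list `u, …, l[j], v, …, l[j+1]`, closed up by the edge from `l[j+1]` to `u`
  have hperm : (p.support.take (j + 1) ++ (p.support.drop (j + 1)).reverse).Perm p.support :=
    ((List.reverse_perm _).append_left _).trans (List.take_append_drop _ _ ▸ List.Perm.refl _)
  have hchain : (p.support.take (j + 1) ++ (p.support.drop (j + 1)).reverse).IsChain G.Adj := by
    refine (p.isChain_adj_support.take _).append
      (List.isChain_reverse.mpr <| (p.isChain_adj_support.drop _).imp fun _ _ h => h.symm) ?_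
    intro x hx y hy
    rw [List.getLast?_take, if_neg j.succ_ne_zero, List.getElem?_eq_getElem (by omega)] at hx
    rw [List.head?_reverse, List.getLast?_drop, if_neg (by omega), hv] at hy
    cases Option.some.inj hx
    cases Option.some.inj hy
    exact hvj.symm
  obtain ⟨c, hc⟩ := exists_isHamiltonian_of_isChain (u := u) (v := p.support[j + 1])
    (hperm.nodup_iff.mpr hnd) (fun y => hperm.mem_iff.mpr (hp.mem_support y)) hchain
    (by rw [List.head?_append, List.head?_take, if_neg j.succ_ne_zero, hu]; rfl)
    (by rw [List.getLast?_append, List.getLast?_reverse, List.head?_drop,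
      List.getElem?_eq_getElem hj]; rfl)
  exact fun _ => ⟨_, _, hc.isHamiltonianCycle_cons huj.symm h3⟩

end Walk

lemma isHamiltonian_top [Fintype V] (h3 : 3 ≤ Fintype.card V) :
    (⊤ : SimpleGraph V).IsHamiltonian := fun _ => by
  have hc : cycleGraph (Fintype.card V) ⊑ (⊤ : SimpleGraph V) :=
    (IsContained.of_le le_top).trans
      ⟨(Embedding.completeGraph (Fintype.equivFin V).symm.toEmbedding).toCopy⟩
  obtain ⟨a, p, hp, hlen⟩ := (cycleGraph_isContained_iff (by omega)).mp hc
  exact ⟨a, p, Walk.isHamiltonianCycle_iff_isCycle_and_length_eq.mpr ⟨hp, hlen⟩⟩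

lemma Walk.IsHamiltonianCycle.exists_support_eq [Fintype V] {c : G.Walk u u}
    (hc : c.IsHamiltonianCycle) (h3 : 3 ≤ Fintype.card V) :
    ∃ w mid z, c.support = u :: (w :: (mid ++ [z]) ++ [u]) ∧
      (u :: w :: (mid ++ [z])).Nodup ∧ ∀ x, x ∈ u :: w :: (mid ++ [z]) := by
  obtain ⟨rest, hsupp⟩ := Walk.exists_support_eq_cons_append_singleton hc.isCycle.not_nil
  have hnd : (u :: rest).Nodup := (List.perm_append_singleton u rest).nodup_iff.mp
    (by simpa [hsupp] using hc.isCycle.support_nodup)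
  have hmem : ∀ x, x ∈ u :: rest := fun x => by
    have := hc.mem_support x
    simp only [hsupp, List.mem_cons, List.mem_append] at this ⊢
    tauto
  have hlen := hnd.length_eq_card hmem
  rcases rest with _ | ⟨w, r⟩
  · simp at hlen; omega
  rcases List.eq_nil_or_concat r with rfl | ⟨mid, z, rfl⟩
  · simp at hlen; omega
  exact ⟨w, mid, z, by simpa using hsupp, by simpa using hnd, by simpa using hmem⟩

theorem exists_isHamiltonian_of_isHamiltonian_sup_edge [Fintype V] (h3 : 3 ≤ Fintype.card V)
    (huv : u ≠ v) (hH : (G ⊔ edge u v).IsHamiltonian) (hG : ¬G.IsHamiltonian) :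
    ∃ p : G.Walk u v, p.IsHamiltonian := by
  have : Nontrivial V := Fintype.one_lt_card_iff_nontrivial.mp (by omega)
  obtain ⟨c, hc⟩ := hH.exists_isHamiltonianCycle u
  obtain ⟨w, mid, z, hsupp, hnd, hmem⟩ := hc.exists_support_eq h3
  have hchain : (u :: (w :: (mid ++ [z]) ++ [u])).IsChain (G ⊔ edge u v).Adj :=
    hsupp ▸ c.isChain_adj_support
  have hu : u ∉ w :: (mid ++ [z]) := (List.nodup_cons.mp hnd).1
  have hwz : w ≠ z := by
    rintro rfl
    simp at hnd
  have huw : (G ⊔ edge u v).Adj u w := (List.isChain_cons_cons.mp hchain).1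
  have hzu : (G ⊔ edge u v).Adj z u :=
    (List.isChain_append.mp hchain.tail).2.2 z
      (by rw [← List.cons_append, List.getLast?_concat]; rfl) u rfl
  have hrest : (w :: (mid ++ [z])).IsChain G.Adj :=
    hchain.tail.left_of_append.imp_of_mem_imp fun x y hx hy h =>
      adj_of_sup_edge_adj h (ne_of_mem_of_not_mem hx hu) (ne_of_mem_of_not_mem hy hu)
  -- `c` runs `u, w, …, z, u`, and one of its two edges at `u` must be the new edge `uv`
  by_cases huw' : G.Adj u w
  · obtain ⟨p, hp⟩ := Walk.exists_isHamiltonian_of_isChain hnd hmem (hrest.cons_cons huw') rfl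
      (by rw [← List.cons_append, ← List.cons_append, List.getLast?_concat])
    obtain rfl | hzv := eq_or_ne z v
    · exact ⟨p, hp⟩
    have hzu' : G.Adj z u := (adj_of_sup_edge_adj_left hzu.symm hzv).symm
    exact absurd (fun _ => ⟨_, _, hp.isHamiltonianCycle_cons hzu' h3⟩) hG
  · obtain rfl : w = v := by_contra fun hwv => huw' (adj_of_sup_edge_adj_left huw hwv)
    have hzu' : G.Adj z u := (adj_of_sup_edge_adj_left hzu.symm hwz.symm).symm
    have hnd' : (w :: (mid ++ [z]) ++ [u]).Nodup :=
      (List.perm_append_singleton u _).nodup_iff.mpr hnd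
    obtain ⟨p, hp⟩ := Walk.exists_isHamiltonian_of_isChain hnd'
      (fun x => (List.perm_append_singleton u _).mem_iff.mpr (hmem x))
      (hrest.append (List.isChain_singleton u) fun x hx y hy => by
        rw [← List.cons_append, List.getLast?_concat, Option.mem_some_iff] at hx
        rw [List.head?_cons, Option.mem_some_iff] at hy
        exact hx ▸ hy ▸ hzu') rfl List.getLast?_concat
    exact ⟨p.reverse, hp.reverse⟩

lemma degree_pos_and_degree_add_lt_of_isHamiltonian_sup_edge [Fintype V] [DecidableRel G.Adj]
    (h3 : 3 ≤ Fintype.card V) (huv : u ≠ v) (hH : (G ⊔ edge u v).IsHamiltonian)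
    (hG : ¬G.IsHamiltonian) : 0 < G.degree u ∧ G.degree u + G.degree v < Fintype.card V := by
  obtain ⟨p, hp⟩ := exists_isHamiltonian_of_isHamiltonian_sup_edge h3 huv hH hG
  exact ⟨(G.degree_pos_iff_exists_adj u).mpr ⟨_, p.adj_snd (Walk.not_nil_of_ne huv)⟩,
    not_le.mp fun hdeg => hG (hp.isHamiltonian_of_card_le_degree_add h3 hdeg)⟩

end Hamiltonian

section Chvatal
variable [Fintype V]

/-- Chvátal's condition for the sorted degrees `d_1 ≤ ⋯ ≤ d_n`, stated without sorting:
`d_k ≥ k + 1` says that every `k` vertices include one of degree `> k`. -/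
def ChvatalCondition (G : SimpleGraph V) [DecidableRel G.Adj] : Prop :=
  ∀ k, 1 ≤ k → 2 * k < Fintype.card V →
    (∀ W : Finset V, k ≤ #W → ∃ w ∈ W, k < G.degree w) ∨
    (∀ U : Finset V, Fintype.card V - k ≤ #U → ∃ w ∈ U, Fintype.card V - k ≤ G.degree w)

lemma ChvatalCondition.mono {Γ G : SimpleGraph V} [DecidableRel Γ.Adj] [DecidableRel G.Adj]
    (hΓ : Γ.ChvatalCondition) (hle : Γ ≤ G) : G.ChvatalCondition := by
  intro k hk hkn
  refine (hΓ k hk hkn).imp (fun h W hW => ?_) (fun h U hU => ?_)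
  · obtain ⟨w, hw, hlt⟩ := h W hW
    exact ⟨w, hw, hlt.trans_le (degree_le_of_le hle)⟩
  · obtain ⟨w, hw, hlt⟩ := h U hU
    exact ⟨w, hw, hlt.trans (degree_le_of_le hle)⟩

lemma ChvatalCondition.adj [DecidableEq V] {G : SimpleGraph V} [DecidableRel G.Adj]
    (hG : G.ChvatalCondition)
    (hpair : ∀ u v, u ≠ v → ¬G.Adj u v →
      0 < G.degree u ∧ G.degree u + G.degree v < Fintype.card V)
    {u v : V} (huv : u ≠ v) : G.Adj u v := by
  by_contra hnadj
  obtain ⟨⟨a, b⟩, hab, hmax⟩ :=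
    exists_max_image {q : V × V | q.1 ≠ q.2 ∧ ¬G.Adj q.1 q.2}
      (fun q => G.degree q.1 + G.degree q.2) ⟨(u, v), by simp [huv, hnadj]⟩
  simp only [mem_filter, mem_univ, true_and] at hab
  replace hmax : ∀ x y, x ≠ y → ¬G.Adj x y →
      G.degree x + G.degree y ≤ G.degree a + G.degree b :=
    fun x y hxy h => hmax (x, y) (by simp [hxy, h])
  wlog hle : G.degree a ≤ G.degree b generalizing a b
  · exact this b a ⟨hab.1.symm, fun h => hab.2 h.symm⟩
      (fun x y hxy h => (hmax x y hxy h).trans_eq (add_comm _ _)) (by omega)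
  obtain ⟨hpos, hsum⟩ := hpair a b hab.1 hab.2
  rcases hG (G.degree a) hpos (by omega) with h | h
  · obtain ⟨w, hw, hkw⟩ := h (Gᶜ.neighborFinset b)
      (by rw [card_neighborFinset_eq_degree, degree_compl]; omega)
    rw [mem_neighborFinset, compl_adj] at hw
    have := hmax w b hw.1.symm fun h => hw.2 h.symm
    omega
  · obtain ⟨w, hw, hkw⟩ := h (insert a (Gᶜ.neighborFinset a))
      (by rw [card_insert_of_notMem (by simp), card_neighborFinset_eq_degree, degree_compl]; omega)
    rcases mem_insert.mp hw with rfl | hw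
    · omega
    · rw [mem_neighborFinset, compl_adj] at hw
      have := hmax a w hw.1 hw.2
      omega

end Chvatal

end SimpleGraph

/-- Chvátal's criterion: if the degrees `d_1 ≤ ⋯ ≤ d_m` of a
finite graph on `m ≥ 3` vertices satisfy `d_k ≥ k + 1` or `d_{m−k} ≥ m − k` for
every `1 ≤ k < m/2`, then the graph contains a Hamiltonian cycle. -/
theorem stmt_6 {V : Type*} [Fintype V] [DecidableEq V] (Γ : SimpleGraph V)
    (hm : 3 ≤ Fintype.card V)
    (e : Fin (Fintype.card V) ≃ V)
    (hmono : Monotone fun i => vertexDegree Γ (e i))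
    (h : ∀ k : ℕ, ∀ _ : 1 ≤ k, ∀ _ : 2 * k < Fintype.card V,
      vertexDegree Γ (e ⟨k - 1, by omega⟩) ≥ k + 1 ∨
      vertexDegree Γ (e ⟨Fintype.card V - k - 1, by omega⟩) ≥ Fintype.card V - k) :
    ∃ (v : V) (w : Γ.Walk v v), w.IsHamiltonianCycle := by
  classical
  simp only [vertexDegree_eq_degree] at hmono h
  have hΓ : Γ.ChvatalCondition := fun k hk hkn => (h k hk hkn).imp
    (fun hd _ hW => exists_mem_le_apply_of_monotone (f := fun x => Γ.degree x) e hmono _ hd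
      (by omega))
    (fun hd _ hU => exists_mem_le_apply_of_monotone (f := fun x => Γ.degree x) e hmono _ hd
      (by omega))
  suffices Γ.IsHamiltonian from this (by omega)
  by_contra hΓH
  obtain ⟨G, -, hmax⟩ := _root_.Finite.exists_le_maximal
    (p := fun H : SimpleGraph V => Γ ≤ H ∧ ¬H.IsHamiltonian) ⟨le_rfl, hΓH⟩
  have hpair : ∀ u v, u ≠ v → ¬G.Adj u v →
      0 < G.degree u ∧ G.degree u + G.degree v < Fintype.card V := fun u v huv hnadj =>
    SimpleGraph.degree_pos_and_degree_add_lt_of_isHamiltonian_sup_edge hm huv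
      (by_contra fun hH =>
        hmax.not_prop_of_gt (G.lt_sup_edge u v huv hnadj) ⟨hmax.prop.1.trans le_sup_left, hH⟩)
      hmax.prop.2
  exact hmax.prop.2 <| (SimpleGraph.isHamiltonian_top hm).mono fun u v huv =>
    (hΓ.mono hmax.prop.1).adj hpair huv
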